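/- Let β_1,…,β_n be a distinguished T-action datum in V, let 1 ≤ j < k ≤ n and let f_{j+1},…,f_{k−1} ∈ ℂ. Define η_j = γ_j and recursively η_l = s_{γ_l}(η_{l−1}) − f_l γ_l for l = j+1,…,k−1. Then −β_j − β_k + Σ_{l=j+1}^{k−1} f_l β_l = 0 if and only if η_{k−1} = γ_k. -/

import Mathlib

/-! Write `w_t = s_{β_1} ⋯ s_{β_t}`, so that `γ_l = w_{l-1}(β_l)`. Reflections are isometries,
hence `s_{w(b)} ∘ w = w ∘ s_b`, and since `f_l γ_l = -w_{l-1}(s_{β_l}(f_l β_l))` an induction on `l`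
gives `η_l = w_l(-β_j + ∑_{j<i≤l} f_i β_i)` (the start `η_j = w_j(-β_j)` is `s_{β_j}(-β_j) = β_j`).
As `w_{k-1}` is injective, `η_{k-1} = w_{k-1}(β_k)` says exactly `-β_j + ∑_{j<i<k} f_i β_i = β_k`. -/

open Finset Matrix

noncomputable section

/-- The standard embedding of an integer vector into `ℂⁿ`. -/
def cvec {n : ℕ} (w : Fin n → ℤ) : Fin n → ℂ := fun j => (w j : ℂ)

/-- `J_w = { j : w_j = -1 }`. -/
def Jset {n : ℕ} (w : Fin n → ℤ) : Finset (Fin n) :=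
  Finset.univ.filter (fun j => w j = -1)

/-- The linear map `β : ℂⁿ → V`, `w ↦ ∑ w_j β_j`. -/
def bmap {n : ℕ} {V : Type*} [AddCommGroup V] [Module ℂ V]
    (β : Fin n → V) (w : Fin n → ℂ) : V :=
  ∑ j, w j • β j

/-- The pair `(λ, β)` is T-log-symplectic. -/
def TLogSymp {n : ℕ} {V : Type*} [AddCommGroup V] [Module ℂ V]
    (M : Matrix (Fin n) (Fin n) ℂ) (β : Fin n → V) : Prop :=
  ∀ w : Fin n → ℂ, M.mulVec w = 0 → bmap β w = 0 → w = 0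

/-- The set `W(λ, β)`. -/
def Wset {n : ℕ} {V : Type*} [AddCommGroup V] [Module ℂ V]
    (M : Matrix (Fin n) (Fin n) ℂ) (β : Fin n → V) : Set (Fin n → ℤ) :=
  {w | (∀ j, -1 ≤ w j) ∧ (∀ j, j ∉ Jset w → M.mulVec (cvec w) j = 0) ∧
    bmap β (cvec w) = 0}

/-- The set `S(λ, β)` of smoothable weights. -/
def Sset {n : ℕ} {V : Type*} [AddCommGroup V] [Module ℂ V]
    (M : Matrix (Fin n) (Fin n) ℂ) (β : Fin n → V) : Set (Fin n → ℤ) :=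
  {θ | θ ∈ Wset M β ∧ (Jset θ).card = 2}

/-- `S_m`: sums of exactly `m` elements of `S`, repetitions allowed. -/
def SumOf {n : ℕ} (S : Set (Fin n → ℤ)) (m : ℕ) : Set (Fin n → ℤ) :=
  {w | ∃ l : Multiset (Fin n → ℤ), (∀ x ∈ l, x ∈ S) ∧ Multiset.card l = m ∧ l.sum = w}

/-- `S_{≥ m}`: sums of at least `m` elements of `S`, repetitions allowed. -/
def SumGE {n : ℕ} (S : Set (Fin n → ℤ)) (m : ℕ) : Set (Fin n → ℤ) :=
  {w | ∃ m', m ≤ m' ∧ w ∈ SumOf S m'}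

/-- A vector `w ∈ ℤⁿ` is negatively bordered. -/
def NegBordered {n : ℕ} (w : Fin n → ℤ) : Prop :=
  ∃ j k : Fin n, j < k ∧ w j = -1 ∧ w k = -1 ∧ (∀ i, i < j → w i = 0) ∧
    (∀ i, k < i → w i = 0) ∧ (∀ i, j < i → i < k → 0 ≤ w i)

/-- The Cartan number `a_{b,ξ} = 2⟨b,ξ⟩/⟨b,b⟩`. -/
def cartan {V : Type*} [AddCommGroup V] [Module ℂ V]
    (B : V →ₗ[ℂ] V →ₗ[ℂ] ℂ) (b ξ : V) : ℂ :=
  2 * B b ξ / B b b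

/-- The reflection `s_b(ξ) = ξ - a_{b,ξ} b`. -/
def sRefl {V : Type*} [AddCommGroup V] [Module ℂ V]
    (B : V →ₗ[ℂ] V →ₗ[ℂ] ℂ) (b ξ : V) : V :=
  ξ - cartan B b ξ • b

/-- `reflL B g m = s_{g 0} ∘ s_{g 1} ∘ ⋯ ∘ s_{g (m-1)}`. -/
def reflL {V : Type*} [AddCommGroup V] [Module ℂ V]
    (B : V →ₗ[ℂ] V →ₗ[ℂ] ℂ) (g : ℕ → V) : ℕ → V → V
  | 0, ξ => ξ
  | m + 1, ξ => reflL B g m (sRefl B (g m) ξ)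

/-- `reflR B g m = s_{g (m-1)} ∘ ⋯ ∘ s_{g 1} ∘ s_{g 0}`. -/
def reflR {V : Type*} [AddCommGroup V] [Module ℂ V]
    (B : V →ₗ[ℂ] V →ₗ[ℂ] ℂ) (g : ℕ → V) : ℕ → V → V
  | 0, ξ => ξ
  | m + 1, ξ => sRefl B (g m) (reflR B g m ξ)

/-- Extension of a `Fin n`-indexed family to `ℕ` by zero. -/
def gext {n : ℕ} {V : Type*} [AddCommGroup V] (v : Fin n → V) : ℕ → V :=
  fun t => if h : t < n then v ⟨t, h⟩ else 0

/-- `γ_j = s_{β_1} s_{β_2} ⋯ s_{β_{j-1}} (β_j)`. -/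
def gam {n : ℕ} {V : Type*} [AddCommGroup V] [Module ℂ V]
    (B : V →ₗ[ℂ] V →ₗ[ℂ] ℂ) (β : Fin n → V) (j : Fin n) : V :=
  reflL B (gext β) j.val (β j)

/-- The Poisson coefficient matrix `λ` of a T-action datum: `λ_{jk} = -⟨β_j, β_k⟩` for
`j < k`, `⟨β_j, β_k⟩` for `j > k`, and `0` on the diagonal. -/
def lam {n : ℕ} {V : Type*} [AddCommGroup V] [Module ℂ V]
    (B : V →ₗ[ℂ] V →ₗ[ℂ] ℂ) (β : Fin n → V) : Matrix (Fin n) (Fin n) ℂ :=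
  Matrix.of fun j k =>
    if j < k then -(B (β j) (β k)) else if k < j then B (β j) (β k) else 0

/-- The upper triangular matrix `Q` with `Q_{jj} = 1` and `Q_{jk} = a_{γ_j, γ_k}` for
`j < k`. -/
def Qmat {n : ℕ} {V : Type*} [AddCommGroup V] [Module ℂ V]
    (B : V →ₗ[ℂ] V →ₗ[ℂ] ℂ) (γ : Fin n → V) : Matrix (Fin n) (Fin n) ℂ :=
  Matrix.of fun j k => if j = k then 1 else if j < k then cartan B (γ j) (γ k) else 0

open scoped Classical in
/-- The set `{k ∈ [j+1, n] : γ_k = γ_j}`, whose minimum (when it exists) is `j⁺`. -/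
def plusSet {n : ℕ} {V : Type*} (γ : Fin n → V) (j : Fin n) : Finset (Fin n) :=
  Finset.univ.filter (fun k => j < k ∧ γ k = γ j)

/-- `e_{j⁺} ∈ ℂⁿ`, with the convention `e_{+∞} = 0`. -/
def eplus {n : ℕ} {V : Type*} (γ : Fin n → V) (j : Fin n) : Fin n → ℂ :=
  if h : (plusSet γ j).Nonempty then Pi.single ((plusSet γ j).min' h) 1 else 0

/-- `θ^{(j)} = Q (e_j - e_{j⁺}) ∈ ℂⁿ`. -/
def thetaC {n : ℕ} {V : Type*} [AddCommGroup V] [Module ℂ V]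
    (B : V →ₗ[ℂ] V →ₗ[ℂ] ℂ) (β : Fin n → V) (j : Fin n) : Fin n → ℂ :=
  (Qmat B (gam B β)).mulVec ((Pi.single j 1 : Fin n → ℂ) - eplus (gam B β) j)

/-- The linear map `β : ℂⁿ → V`, `w ↦ ∑ w_j β_j`, as a bundled linear map. -/
def betaLin {n : ℕ} {V : Type*} [AddCommGroup V] [Module ℂ V]
    (β : Fin n → V) : (Fin n → ℂ) →ₗ[ℂ] V where
  toFun w := ∑ j, w j • β j
  map_add' x y := by simp [add_smul, Finset.sum_add_distrib]
  map_smul' a x := by simp [Finset.smul_sum, mul_smul]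

section Reflections

variable {V : Type*} [AddCommGroup V] [Module ℂ V] (B : V →ₗ[ℂ] V →ₗ[ℂ] ℂ)

def sReflₗ (b : V) : V →ₗ[ℂ] V where
  toFun := sRefl B b
  map_add' x y := by
    simp only [sRefl, cartan, map_add, mul_add, add_div, add_smul]
    abel
  map_smul' a x := by
    simp only [sRefl, cartan, map_smul, smul_eq_mul, RingHom.id_apply, smul_sub, smul_smul]
    congr 2
    ring

@[simp]
lemma sReflₗ_apply (b x : V) : sReflₗ B b x = sRefl B b x := rfl

def reflLₗ (g : ℕ → V) : ℕ → V →ₗ[ℂ] V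
  | 0 => LinearMap.id
  | m + 1 => reflLₗ g m ∘ₗ sReflₗ B (g m)

@[simp]
lemma reflLₗ_apply (g : ℕ → V) (m : ℕ) (x : V) : reflLₗ B g m x = reflL B g m x := by
  induction m generalizing x with
  | zero => rfl
  | succ m ih => simp [reflLₗ, reflL, ih]

variable {B}

lemma sRefl_self {b : V} (hb : B b b ≠ 0) : sRefl B b b = -b := by
  rw [sRefl, cartan, mul_div_assoc, div_self hb, mul_one, two_smul]
  abel

lemma sRefl_involutive {b : V} (hb : B b b ≠ 0) : Function.Involutive (sRefl B b) := by
  intro x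
  change sReflₗ B b (x - cartan B b x • b) = x
  rw [map_sub, map_smul, sReflₗ_apply, sReflₗ_apply, sRefl_self hb, smul_neg, sub_neg_eq_add,
    sRefl, sub_add_cancel]

lemma apply_sRefl_sRefl (hB : ∀ x y, B x y = B y x) {b : V} (hb : B b b ≠ 0) (x y : V) :
    B (sRefl B b x) (sRefl B b y) = B x y := by
  simp only [sRefl, cartan, map_sub, map_smul, LinearMap.sub_apply, LinearMap.smul_apply,
    smul_eq_mul, hB x b]
  field_simp
  ring

lemma sRefl_sRefl_conj (hB : ∀ x y, B x y = B y x) {b : V} (hb : B b b ≠ 0) (c x : V) :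
    sRefl B (sRefl B b c) (sRefl B b x) = sRefl B b (sRefl B c x) := by
  have hcartan : cartan B (sRefl B b c) (sRefl B b x) = cartan B c x := by
    simp only [cartan, apply_sRefl_sRefl hB hb]
  nth_rewrite 1 [sRefl]
  rw [hcartan, ← sReflₗ_apply, ← sReflₗ_apply, ← map_smul, ← map_sub]
  rfl

lemma reflL_conj (hB : ∀ x y, B x y = B y x) {g : ℕ → V} {m : ℕ}
    (hg : ∀ i < m, B (g i) (g i) ≠ 0) (c x : V) :
    sRefl B (reflL B g m c) (reflL B g m x) = reflL B g m (sRefl B c x) := by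
  induction m generalizing c x with
  | zero => rfl
  | succ m ih =>
    rw [reflL, reflL, ih (fun i hi => hg i (by omega)), sRefl_sRefl_conj hB (hg m m.lt_succ_self)]
    rfl

lemma reflL_injective {g : ℕ → V} {m : ℕ} (hg : ∀ i < m, B (g i) (g i) ≠ 0) :
    Function.Injective (reflL B g m) := by
  induction m with
  | zero => exact Function.injective_id
  | succ m ih =>
    exact (ih fun i hi => hg i (by omega)).comp (sRefl_involutive (hg m m.lt_succ_self)).injective

lemma sRefl_reflL_sub_smul (hB : ∀ x y, B x y = B y x) {g : ℕ → V} {m : ℕ}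
    (hg : ∀ i ≤ m, B (g i) (g i) ≠ 0) (ζ : V) (a : ℂ) :
    sRefl B (reflL B g m (g m)) (reflL B g m ζ) - a • reflL B g m (g m) =
      reflL B g (m + 1) (ζ + a • g m) := by
  have hζ : sRefl B (g m) (ζ + a • g m) = sRefl B (g m) ζ - a • g m := by
    rw [← sReflₗ_apply, map_add, map_smul, sReflₗ_apply, sReflₗ_apply, sRefl_self (hg m le_rfl),
      smul_neg, sub_eq_add_neg]
  rw [reflL_conj hB (fun i hi => hg i hi.le), reflL, hζ, ← reflLₗ_apply, ← reflLₗ_apply,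
    ← reflLₗ_apply, ← map_smul, ← map_sub]

end Reflections

section Recursion

variable {n : ℕ} {V : Type*} [AddCommGroup V]

lemma gext_apply (v : Fin n → V) (l : Fin n) : gext v l = v l := dif_pos l.isLt

variable [Module ℂ V]

lemma apply_gext_ne_zero {B : V →ₗ[ℂ] V →ₗ[ℂ] ℂ} {β : Fin n → V} (hβ : ∀ j, B (β j) (β j) ≠ 0)
    {i : ℕ} (hi : i < n) : B (gext β i) (gext β i) ≠ 0 := by
  rw [gext, dif_pos hi]
  exact hβ _

def partialSum (β : Fin n → V) (f : Fin n → ℂ) (j l : Fin n) : V :=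
  -β j + ∑ i ∈ univ.filter (fun i => j < i ∧ i ≤ l), f i • β i

lemma partialSum_self (β : Fin n → V) (f : Fin n → ℂ) (j : Fin n) :
    partialSum β f j j = -β j := by
  rw [partialSum, add_eq_left]
  refine sum_eq_zero fun i hi => ?_
  simp only [mem_filter] at hi
  exact absurd hi.2.1 (not_lt.2 hi.2.2)

lemma partialSum_of_val_eq_succ (β : Fin n → V) (f : Fin n → ℂ) {j l m : Fin n} (hjl : j < l)
    (hm : (m : ℕ) + 1 = l) : partialSum β f j l = partialSum β f j m + f l • β l := by
  have hfilter : univ.filter (fun i => j < i ∧ i ≤ l) =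
      insert l (univ.filter (fun i => j < i ∧ i ≤ m)) := by
    ext i
    simp only [mem_filter, mem_univ, true_and, mem_insert, Fin.lt_def, Fin.le_def, Fin.ext_iff]
    omega
  have hl : l ∉ univ.filter (fun i => j < i ∧ i ≤ m) := by
    simp only [mem_filter, mem_univ, true_and, Fin.le_def, not_and]
    omega
  rw [partialSum, hfilter, sum_insert hl, partialSum]
  abel

variable {B : V →ₗ[ℂ] V →ₗ[ℂ] ℂ}

lemma eq_reflL_partialSum (hB : ∀ x y, B x y = B y x) {β : Fin n → V}
    (hβ : ∀ j, B (β j) (β j) ≠ 0) {j k : Fin n} {f : Fin n → ℂ} {η : Fin n → V}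
    (hη0 : η j = gam B β j)
    (hrec : ∀ l m : Fin n, j < l → l < k → (m : ℕ) + 1 = (l : ℕ) →
      η l = sRefl B (gam B β l) (η m) - f l • gam B β l)
    (l : Fin n) (hjl : j ≤ l) (hlk : l < k) :
    η l = reflL B (gext β) (l + 1) (partialSum β f j l) := by
  obtain ⟨d, hd⟩ := Nat.exists_eq_add_of_le (Fin.le_def.1 hjl)
  induction d generalizing l with
  | zero =>
    obtain rfl : l = j := Fin.ext hd
    rw [partialSum_self, hη0, gam, reflL, gext_apply, ← sReflₗ_apply, map_neg, sReflₗ_apply,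
      sRefl_self (hβ l), neg_neg]
  | succ d ih =>
    set m : Fin n := ⟨j + d, by omega⟩
    have hm : (m : ℕ) + 1 = l := by simp only [m]; omega
    rw [hrec l m (Fin.lt_def.2 (by omega)) hlk hm,
      ih m (Fin.le_def.2 (by simp [m])) ((Fin.lt_def.2 (by omega)).trans hlk) rfl, hm, gam,
      ← gext_apply β l, sRefl_reflL_sub_smul hB fun i hi => apply_gext_ne_zero hβ (by omega),
      gext_apply, partialSum_of_val_eq_succ β f (Fin.lt_def.2 (by omega)) hm]

end Recursion

theorem stmt15_general (n : ℕ) {V : Type*} [AddCommGroup V] [Module ℂ V]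
    (B : V →ₗ[ℂ] V →ₗ[ℂ] ℂ) (hBsymm : ∀ x y, B x y = B y x)
    (β : Fin n → V) (hβ : ∀ j, B (β j) (β j) ≠ 0)
    (j k : Fin n) (hjk : j < k) (f : Fin n → ℂ)
    (η : Fin n → V) (hη0 : η j = gam B β j)
    (hrec : ∀ l m : Fin n, j < l → l < k → (m : ℕ) + 1 = (l : ℕ) →
      η l = sRefl B (gam B β l) (η m) - f l • gam B β l)
    (m : Fin n) (hm : (m : ℕ) + 1 = (k : ℕ)) :
    (-β j - β k + ∑ l ∈ Finset.univ.filter (fun l => j < l ∧ l < k), f l • β l = 0)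
      ↔ η m = gam B β k := by
  have hjk' := Fin.lt_def.1 hjk
  have hη : η m = reflL B (gext β) k (partialSum β f j m) := by
    rw [← hm]
    exact eq_reflL_partialSum hBsymm hβ hη0 hrec m (Fin.le_def.2 (by omega))
      (Fin.lt_def.2 (by omega))
  have hfilter : univ.filter (fun l => j < l ∧ l ≤ m) = univ.filter (fun l => j < l ∧ l < k) := by
    ext l
    simp only [mem_filter, mem_univ, true_and, Fin.le_def, Fin.lt_def]
    omega
  have hinj := reflL_injective fun i (hi : i < (k : ℕ)) => apply_gext_ne_zero hβ (hi.trans k.isLt)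
  rw [hη, gam, hinj.eq_iff, partialSum, hfilter, ← sub_eq_zero (b := β k), add_sub_right_comm]

theorem stmt15 (n : ℕ) (hn : 0 < n) {V : Type*} [AddCommGroup V] [Module ℂ V]
    (B : V →ₗ[ℂ] V →ₗ[ℂ] ℂ) (hBsymm : ∀ x y, B x y = B y x)
    (β : Fin n → V) (hβ : ∀ j, B (β j) (β j) ≠ 0)
    (hdist : LinearIndependent ℂ (fun v : Set.range (gam B β) => (v : V)))
    (j k : Fin n) (hjk : j < k) (f : Fin n → ℂ)
    (η : Fin n → V) (hη0 : η j = gam B β j)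
    (hrec : ∀ l m : Fin n, j < l → l < k → (m : ℕ) + 1 = (l : ℕ) →
      η l = sRefl B (gam B β l) (η m) - f l • gam B β l)
    (m : Fin n) (hm : (m : ℕ) + 1 = (k : ℕ)) :
    (-β j - β k + ∑ l ∈ Finset.univ.filter (fun l => j < l ∧ l < k), f l • β l = 0)
      ↔ η m = gam B β k :=
  stmt15_general n B hBsymm β hβ j k hjk f η hη0 hrec m hm
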